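/- arXiv:1211.4803 — 3 statements merged into one kernel-verified Lean document; each statement's English description precedes it below -/
import Mathlib

section
/- For each i ∈ ℕ, the set U_i = {f ∈ C[0,1] : ∃ R ≥ i such that inf over Borel probability measures μ supported on the graph G_f of sup_{i ≤ |ξ| ≤ R} |μ̂(ξ)| > 1/5} is open in C[0,1] with the sup-norm. -/
open MeasureTheory Set

noncomputable def ft2 (μ : Measure (ℝ × ℝ)) (ξ : ℝ × ℝ) : ℂ :=
  ∫ x, Complex.exp (-2 * Real.pi * Complex.I * ((x.1 * ξ.1 + x.2 * ξ.2 : ℝ) : ℂ)) ∂μ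

noncomputable def enorm2 (ξ : ℝ × ℝ) : ℝ := Real.sqrt (ξ.1 ^ 2 + ξ.2 ^ 2)

/-- The graph of a continuous function on `[0,1]`, as a subset of `ℝ × ℝ`. -/
def graphOf (f : C(Set.Icc (0:ℝ) 1, ℝ)) : Set (ℝ × ℝ) :=
  {p : ℝ × ℝ | ∃ x : Set.Icc (0:ℝ) 1, p.1 = (x : ℝ) ∧ p.2 = f x}

/-- The set `U_i` of functions `f` such that for some `R ≥ i`, every Borel probability
measure on the graph of `f` has `sup_{i ≤ |ξ| ≤ R} |μ̂(ξ)| > 1/5`, uniformly in `μ`. -/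
def U (i : ℕ) : Set C(Set.Icc (0:ℝ) 1, ℝ) :=
  {f | ∃ R : ℝ, (i : ℝ) ≤ R ∧ ∃ c : ℝ, 1 / 5 < c ∧
    ∀ μ : Measure (ℝ × ℝ), IsProbabilityMeasure μ → μ (graphOf f)ᶜ = 0 →
      ∃ ξ : ℝ × ℝ, (i : ℝ) ≤ enorm2 ξ ∧ enorm2 ξ ≤ R ∧ c ≤ ‖ft2 μ ξ‖}

/-! If `‖g - f‖ < δ`, push a probability measure `μ` on the graph of `g` forward along the
vertical map `(x, y) ↦ (x, f x)`: this gives a probability measure `ν` on the graph of `f`, and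
since the phases of the two Fourier integrands differ by `(g x - f x) ξ₂`, we get
`|μ̂(ξ) - ν̂(ξ)| ≤ 2π |ξ| ‖g - f‖`. For `|ξ| ≤ R` the uniform lower bound `c` on
`sup |ν̂|` therefore passes to `μ` with the loss `2π R δ`, which stays below `c - 1/5`. -/

lemma norm_exp_neg_two_pi_I_mul (a : ℝ) :
    ‖Complex.exp (-2 * Real.pi * Complex.I * a)‖ = 1 := by
  rw [Complex.norm_exp]
  simp

lemma norm_exp_neg_two_pi_I_sub_le (a b : ℝ) :
    ‖Complex.exp (-2 * Real.pi * Complex.I * a) - Complex.exp (-2 * Real.pi * Complex.I * b)‖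
      ≤ 2 * Real.pi * |a - b| := by
  have hfactor : Complex.exp (-2 * Real.pi * Complex.I * a) -
      Complex.exp (-2 * Real.pi * Complex.I * b) =
      Complex.exp (-2 * Real.pi * Complex.I * b) *
        (Complex.exp (Complex.I * ((2 * Real.pi * (b - a) : ℝ) : ℂ)) - 1) := by
    rw [mul_sub, ← Complex.exp_add]
    push_cast
    ring_nf
  calc _ = ‖Complex.exp (Complex.I * ((2 * Real.pi * (b - a) : ℝ) : ℂ)) - 1‖ := by
        rw [hfactor, norm_mul, norm_exp_neg_two_pi_I_mul, one_mul]
    _ ≤ ‖2 * Real.pi * (b - a)‖ := Real.norm_exp_I_mul_ofReal_sub_one_le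
    _ = 2 * Real.pi * |a - b| := by
        rw [Real.norm_eq_abs, abs_mul, abs_of_pos Real.two_pi_pos, abs_sub_comm]

lemma norm_integral_exp_sub_integral_exp_le {X : Type*} [MeasurableSpace X] (μ : Measure X)
    [IsFiniteMeasure μ] {φ ψ : X → ℝ} (hφ : Measurable φ) (hψ : Measurable ψ) {C : ℝ}
    (hC : ∀ᵐ x ∂μ, |φ x - ψ x| ≤ C) :
    ‖(∫ x, Complex.exp (-2 * Real.pi * Complex.I * φ x) ∂μ) -
        ∫ x, Complex.exp (-2 * Real.pi * Complex.I * ψ x) ∂μ‖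
      ≤ 2 * Real.pi * C * μ.real univ := by
  have hint : ∀ {χ : X → ℝ}, Measurable χ →
      Integrable (fun x => Complex.exp (-2 * Real.pi * Complex.I * χ x)) μ := fun hχ =>
    (integrable_const (1 : ℝ)).mono' (by fun_prop)
      (ae_of_all _ fun x => (norm_exp_neg_two_pi_I_mul _).le)
  rw [← integral_sub (hint hφ) (hint hψ)]
  refine norm_integral_le_of_norm_le_const ?_
  filter_upwards [hC] with x hx
  calc _ ≤ 2 * Real.pi * |φ x - ψ x| := norm_exp_neg_two_pi_I_sub_le _ _
    _ ≤ 2 * Real.pi * C := by gcongr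

lemma abs_snd_le_enorm2 (ξ : ℝ × ℝ) : |ξ.2| ≤ enorm2 ξ :=
  Real.abs_le_sqrt (le_add_of_nonneg_left (sq_nonneg ξ.1))

lemma graphOf_eq_range (f : C(Icc (0:ℝ) 1, ℝ)) :
    graphOf f = range fun x : Icc (0:ℝ) 1 => ((x : ℝ), f x) := by
  ext p
  simp only [graphOf, mem_ofPred_eq, mem_range, Prod.ext_iff, eq_comm]

lemma isClosed_graphOf (f : C(Icc (0:ℝ) 1, ℝ)) : IsClosed (graphOf f) := by
  rw [graphOf_eq_range, ← image_univ]
  exact (isCompact_univ.image (by fun_prop)).isClosed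

/-- The map `T_{g,f}` of the paper, extended continuously off the strip `[0,1] × ℝ`. -/
noncomputable def toGraph (f : C(Icc (0:ℝ) 1, ℝ)) (p : ℝ × ℝ) : ℝ × ℝ :=
  (p.1, IccExtend zero_le_one f p.1)

lemma continuous_toGraph (f : C(Icc (0:ℝ) 1, ℝ)) : Continuous (toGraph f) :=
  continuous_fst.prodMk (f.continuous.Icc_extend'.comp continuous_fst)

@[simp]
lemma toGraph_coe_mk (f : C(Icc (0:ℝ) 1, ℝ)) (x : Icc (0:ℝ) 1) (y : ℝ) :
    toGraph f ((x : ℝ), y) = ((x : ℝ), f x) := by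
  simp only [toGraph, IccExtend_val]

lemma mapsTo_toGraph (f g : C(Icc (0:ℝ) 1, ℝ)) :
    MapsTo (toGraph f) (graphOf g) (graphOf f) := by
  rw [graphOf_eq_range, graphOf_eq_range]
  rintro _ ⟨x, rfl⟩
  exact ⟨x, (toGraph_coe_mk f x (g x)).symm⟩

lemma map_toGraph_compl_graphOf {f g : C(Icc (0:ℝ) 1, ℝ)} {μ : Measure (ℝ × ℝ)}
    (hμ : μ (graphOf g)ᶜ = 0) : μ.map (toGraph f) (graphOf f)ᶜ = 0 := by
  rw [Measure.map_apply (continuous_toGraph f).measurable (isClosed_graphOf f).measurableSet.compl]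
  exact measure_mono_null (fun p hp hg => hp (mapsTo_toGraph f g hg)) hμ

lemma norm_ft2_sub_ft2_map_toGraph_le {f g : C(Icc (0:ℝ) 1, ℝ)} {μ : Measure (ℝ × ℝ)}
    [IsFiniteMeasure μ] (hμ : μ (graphOf g)ᶜ = 0) (ξ : ℝ × ℝ) :
    ‖ft2 μ ξ - ft2 (μ.map (toGraph f)) ξ‖
      ≤ 2 * Real.pi * (enorm2 ξ * dist g f) * μ.real univ := by
  rw [ft2, ft2, integral_map (continuous_toGraph f).aemeasurable (by fun_prop)]
  refine norm_integral_exp_sub_integral_exp_le μ (by fun_prop) (by fun_prop) ?_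
  filter_upwards [mem_ae_iff.mpr hμ] with p hp
  obtain ⟨x, rfl⟩ : p ∈ range fun x : Icc (0:ℝ) 1 => ((x : ℝ), g x) :=
    graphOf_eq_range g ▸ hp
  have hphase : x * ξ.1 + g x * ξ.2 -
      ((toGraph f (x, g x)).1 * ξ.1 + (toGraph f (x, g x)).2 * ξ.2) = (g x - f x) * ξ.2 := by
    rw [toGraph_coe_mk]
    ring
  rw [hphase, abs_mul, mul_comm (enorm2 ξ)]
  have hgf : |g x - f x| ≤ dist g f := by
    simpa only [Real.dist_eq] using ContinuousMap.dist_apply_le_dist (f := g) (g := f) x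
  exact mul_le_mul hgf (abs_snd_le_enorm2 ξ) (abs_nonneg _) dist_nonneg

theorem U_isOpen (i : ℕ) : IsOpen (U i) := by
  rw [Metric.isOpen_iff]
  rintro f ⟨R, hiR, c, hc, hf⟩
  have hR : 0 ≤ R := (Nat.cast_nonneg i).trans hiR
  set δ := (c - 1 / 5) / (2 * (2 * Real.pi * R + 1))
  have hδ : 0 < δ := div_pos (by linarith) (by positivity)
  have hRδ : 2 * Real.pi * R * δ ≤ (c - 1 / 5) / 2 := by
    rw [show (c - 1 / 5) / 2 = (2 * Real.pi * R + 1) * δ by simp only [δ]; field_simp]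
    linarith
  refine ⟨δ, hδ, fun g hg => ⟨R, hiR, (c + 1 / 5) / 2, by linarith, fun μ _ hμ => ?_⟩⟩
  set ν := μ.map (toGraph f)
  obtain ⟨ξ, hiξ, hξR, hcξ⟩ := hf ν
    (Measure.isProbabilityMeasure_map (continuous_toGraph f).aemeasurable)
    (map_toGraph_compl_graphOf hμ)
  refine ⟨ξ, hiξ, hξR, ?_⟩
  have htransfer := norm_ft2_sub_ft2_map_toGraph_le (f := f) hμ ξ
  rw [probReal_univ, mul_one] at htransfer
  have hsmall : 2 * Real.pi * (enorm2 ξ * dist g f) ≤ 2 * Real.pi * R * δ := by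
    rw [← mul_assoc]
    gcongr
    exact (Metric.mem_ball.mp hg).le
  calc (c + 1 / 5) / 2 ≤ ‖ft2 ν ξ‖ - ‖ft2 μ ξ - ft2 ν ξ‖ := by linarith
    _ ≤ ‖ft2 μ ξ‖ := by
      linarith [norm_sub_norm_le (ft2 ν ξ) (ft2 μ ξ), norm_sub_rev (ft2 μ ξ) (ft2 ν ξ)]
end

section
/- For a typical (residual in the Baire category sense) function f in C[0,1], every Borel probability measure μ supported on the graph G_f satisfies limsup_{|ξ|→∞} |μ̂(ξ)| ≥ 1/5. In particular, the set of f ∈ C[0,1] for which every Borel probability measure on G_f has this property is residual in C[0,1]. -/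
open MeasureTheory Filter Set

/-
Let `γ > 0` and `P ∈ ℕ`. If a point `p` lies on a line `y = γ (k ± P x / 2)` with `k ∈ ℤ`, then for
`ξ = (∓P/2, 1/γ)` the phase `⟨p, ξ⟩` is an integer, so `cos 2π⟨p, ξ⟩ + cos 2π⟨p, 2ξ⟩ = 2`, while
`cos x + cos 2x ≥ -9/8` handles the other sign: the four waves of frequencies `ξ₋, 2ξ₋, ξ₊, 2ξ₊`
sum to at least `7/8` on such a zigzag graph, and still to `17/20` on the graph of any function
`γ/2000`-close to it. Integrating against a probability measure on the graph, one of the four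
Fourier coefficients, at a frequency of size at least `1/γ`, has real part above `1/5`. Zigzags
following a greedy `±1` walk approximate every continuous function, so for each radius `R` the
functions having such a coefficient beyond `R` contain a dense open set; intersecting over `R ∈ ℕ`
gives a residual set on which `limsup |μ̂| ≥ 1/5`.
-/

open Real

lemma neg_nine_div_eight_le_cos_add_cos_two_mul (x : ℝ) : -(9 / 8) ≤ cos x + cos (2 * x) := by
  rw [cos_two_mul]
  nlinarith [sq_nonneg (cos x + 1 / 4)]

def phase (ξ p : ℝ × ℝ) : ℝ := p.1 * ξ.1 + p.2 * ξ.2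

noncomputable def wave (ξ p : ℝ × ℝ) : ℝ := cos (2 * π * phase ξ p)

lemma phase_smul (c : ℝ) (ξ p : ℝ × ℝ) : phase (c • ξ) p = c * phase ξ p := by
  simp only [phase, Prod.smul_fst, Prod.smul_snd, smul_eq_mul]
  ring

lemma wave_eq_one_of_phase_eq_int {ξ p : ℝ × ℝ} {k : ℤ} (h : phase ξ p = k) : wave ξ p = 1 := by
  rw [wave, h, mul_comm]
  exact cos_int_mul_two_pi k

lemma abs_wave_sub_wave_le (ξ p q : ℝ × ℝ) :
    |wave ξ p - wave ξ q| ≤ 2 * π * |phase ξ p - phase ξ q| := by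
  calc |wave ξ p - wave ξ q| ≤ |2 * π * phase ξ p - 2 * π * phase ξ q| := abs_cos_sub_cos_le _ _
    _ = 2 * π * |phase ξ p - phase ξ q| := by
      rw [← mul_sub, abs_mul, abs_of_pos two_pi_pos]

lemma seven_eighths_le_wave_add_wave {ξ p : ℝ × ℝ} {k : ℤ} (hk : phase ξ p = k) (η : ℝ × ℝ) :
    7 / 8 ≤ wave ξ p + wave ((2 : ℝ) • ξ) p + (wave η p + wave ((2 : ℝ) • η) p) := by
  have h2k : phase ((2 : ℝ) • ξ) p = (2 * k : ℤ) := by rw [phase_smul, hk]; push_cast; ring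
  have hη : -(9 / 8) ≤ wave η p + wave ((2 : ℝ) • η) p := by
    rw [show wave ((2 : ℝ) • η) p = cos (2 * (2 * π * phase η p)) by rw [wave, phase_smul]; ring_nf]
    exact neg_nine_div_eight_le_cos_add_cos_two_mul _
  linarith [wave_eq_one_of_phase_eq_int hk, wave_eq_one_of_phase_eq_int h2k]

lemma seventeen_twentieths_le_sum_wave {ξ η p q : ℝ × ℝ}
    (hq : (∃ k : ℤ, phase ξ q = k) ∨ ∃ k : ℤ, phase η q = k)
    (hξ : |phase ξ p - phase ξ q| ≤ 1 / 2000) (hη : |phase η p - phase η q| ≤ 1 / 2000) :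
    17 / 20 ≤ ∑ i, wave (![ξ, (2 : ℝ) • ξ, η, (2 : ℝ) • η] i) p := by
  have hq78 : 7 / 8 ≤ wave ξ q + wave ((2 : ℝ) • ξ) q + wave η q + wave ((2 : ℝ) • η) q := by
    rcases hq with ⟨k, hk⟩ | ⟨k, hk⟩
    · linarith [seven_eighths_le_wave_add_wave hk η]
    · linarith [seven_eighths_le_wave_add_wave hk ξ]
  have hclose : ∀ ζ : ℝ × ℝ, ∀ c : ℝ, |phase ζ p - phase ζ q| ≤ c / 2000 →
      wave ζ q - 8 * c / 2000 ≤ wave ζ p := fun ζ c hζ => by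
    have h := abs_le.mp (abs_wave_sub_wave_le ζ p q)
    nlinarith [pi_lt_four, pi_pos, abs_nonneg (phase ζ p - phase ζ q)]
  have hdouble : ∀ ζ : ℝ × ℝ, |phase ζ p - phase ζ q| ≤ 1 / 2000 →
      |phase ((2 : ℝ) • ζ) p - phase ((2 : ℝ) • ζ) q| ≤ 2 / 2000 := fun ζ hζ => by
    rw [phase_smul, phase_smul, ← mul_sub, abs_mul, abs_two]
    linarith
  simp only [Fin.sum_univ_four, Matrix.cons_val_zero, Matrix.cons_val_one, Matrix.cons_val_two,
    Matrix.cons_val_three, Matrix.head_cons, Matrix.tail_cons]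
  linarith [hclose ξ 1 hξ, hclose η 1 hη, hclose _ 2 (hdouble ξ hξ), hclose _ 2 (hdouble η hη)]

lemma ft2_integrand_eq (ξ p : ℝ × ℝ) :
    Complex.exp (-2 * π * Complex.I * ((p.1 * ξ.1 + p.2 * ξ.2 : ℝ) : ℂ))
      = Complex.exp ((-(2 * π * phase ξ p) : ℝ) * Complex.I) := by
  simp only [phase]; push_cast; ring_nf

lemma norm_ft2_le_one (μ : Measure (ℝ × ℝ)) [IsProbabilityMeasure μ] (ξ : ℝ × ℝ) :
    ‖ft2 μ ξ‖ ≤ 1 := by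
  rw [ft2]
  refine (norm_integral_le_of_norm_le_const (C := 1) (Eventually.of_forall fun p => ?_)).trans_eq
    (by simp)
  rw [ft2_integrand_eq, Complex.norm_exp_ofReal_mul_I]

lemma re_ft2 (μ : Measure (ℝ × ℝ)) [IsFiniteMeasure μ] (ξ : ℝ × ℝ) :
    (ft2 μ ξ).re = ∫ p, wave ξ p ∂μ := by
  have hint : Integrable (fun p : ℝ × ℝ =>
      Complex.exp (-2 * π * Complex.I * ((p.1 * ξ.1 + p.2 * ξ.2 : ℝ) : ℂ))) μ := by
    refine (integrable_const (1 : ℝ)).mono' (by fun_prop) (Eventually.of_forall fun p => ?_)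
    rw [ft2_integrand_eq, Complex.norm_exp_ofReal_mul_I]
  rw [ft2, ← RCLike.re_to_complex, ← integral_re hint]
  simp only [ft2_integrand_eq, RCLike.re_to_complex, Complex.exp_ofReal_mul_I_re, cos_neg, wave]

lemma integrable_wave (μ : Measure (ℝ × ℝ)) [IsFiniteMeasure μ] (ξ : ℝ × ℝ) :
    Integrable (wave ξ) μ :=
  (integrable_const (1 : ℝ)).mono' (by unfold wave phase; fun_prop)
    (Eventually.of_forall fun p => (norm_eq_abs _).trans_le (abs_cos_le_one _))

lemma le_sum_re_ft2_of_ae_le {ι : Type*} [Fintype ι] (μ : Measure (ℝ × ℝ))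
    [IsProbabilityMeasure μ] (ξ : ι → ℝ × ℝ) {c : ℝ}
    (h : ∀ᵐ p ∂μ, c ≤ ∑ i, wave (ξ i) p) : c ≤ ∑ i, (ft2 μ (ξ i)).re := by
  simp only [re_ft2]
  rw [← integral_finsetSum _ fun i _ => integrable_wave μ (ξ i)]
  simpa using integral_mono_ae (integrable_const c)
    (integrable_finsetSum _ fun i _ => integrable_wave μ (ξ i)) h

lemma le_limsup_cocompact_of_forall_exists {E : Type*} [NormedAddCommGroup E] {φ : E → ℝ}
    (hφ : BddAbove (range φ)) {c : ℝ} (h : ∀ R : ℝ, ∃ ξ, R ≤ ‖ξ‖ ∧ c ≤ φ ξ) :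
    c ≤ limsup φ (cocompact E) := by
  refine le_limsup_of_frequently_le ?_ hφ.isBoundedUnder_of_range
  refine Frequently.filter_mono ?_ Metric.cobounded_le_cocompact
  rw [← comap_norm_atTop, frequently_comap, frequently_atTop]
  intro R
  obtain ⟨ξ, hR, hc⟩ := h R
  exact ⟨‖ξ‖, hR, ξ, rfl, hc⟩

noncomputable def greedyWalk (a : ℕ → ℝ) : ℕ → ℤ
  | 0 => 2 * round (a 0 / 2)
  | i + 1 => greedyWalk a i + if (greedyWalk a i : ℝ) ≤ a (i + 1) then 1 else -1

lemma greedyWalk_succ_eq_or (a : ℕ → ℝ) (i : ℕ) :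
    greedyWalk a (i + 1) = greedyWalk a i + 1 ∨ greedyWalk a (i + 1) = greedyWalk a i - 1 := by
  rw [greedyWalk]
  split_ifs
  exacts [Or.inl rfl, Or.inr rfl]

lemma even_greedyWalk_sub (a : ℕ → ℝ) (i : ℕ) : Even (greedyWalk a i - i) := by
  induction i with
  | zero => simp [greedyWalk]
  | succ i ih =>
    rcases greedyWalk_succ_eq_or a i with h | h <;> rw [h] <;> push_cast
    · rwa [add_sub_add_right_eq_sub]
    · rw [show greedyWalk a i - 1 - ((i : ℤ) + 1) = greedyWalk a i - i - 2 by ring]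
      exact ih.sub even_two

lemma abs_greedyWalk_sub_le {a : ℕ → ℝ} {n : ℕ} (ha : ∀ i < n, |a (i + 1) - a i| ≤ 1) :
    ∀ i ≤ n, |(greedyWalk a i : ℝ) - a i| ≤ 1 := by
  intro i
  induction i with
  | zero =>
    intro _
    have h := abs_sub_round (a 0 / 2)
    rw [greedyWalk]; push_cast
    rw [abs_sub_comm] at h
    calc |2 * (round (a 0 / 2) : ℝ) - a 0| = 2 * |(round (a 0 / 2) : ℝ) - a 0 / 2| := by
          rw [← abs_two, ← abs_mul, abs_two, mul_sub, mul_div_cancel₀ _ two_ne_zero]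
      _ ≤ 1 := by linarith
  | succ i ih =>
    intro hi
    have h1 := abs_le.mp (ih (by omega))
    have h2 := abs_le.mp (ha i (by omega))
    rw [abs_le, greedyWalk]
    split_ifs <;> push_cast <;> constructor <;> linarith

lemma exists_lt_mem_Icc_add_one {n : ℕ} (hn : 0 < n) {s : ℝ} (hs : s ∈ Icc (0 : ℝ) n) :
    ∃ i < n, s ∈ Icc (i : ℝ) (i + 1) := by
  by_cases h : ⌊s⌋₊ < n
  · exact ⟨⌊s⌋₊, h, Nat.floor_le hs.1, (Nat.lt_floor_add_one s).le⟩
  · have : (n : ℝ) ≤ s := (Nat.le_floor_iff hs.1).mp (not_lt.mp h)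
    refine ⟨n - 1, by omega, ?_, ?_⟩ <;> push_cast [Nat.cast_sub hn] <;> linarith [hs.2]

/-- The piecewise linear interpolation of `W` at `0, 1, …, n`. -/
noncomputable def zigzag (n : ℕ) (W : ℕ → ℤ) (s : ℝ) : ℝ :=
  W 0 + ∑ j ∈ Finset.range n, ((W (j + 1) : ℝ) - W j) * max 0 (min 1 (s - j))

lemma continuous_zigzag (n : ℕ) (W : ℕ → ℤ) : Continuous (zigzag n W) := by
  unfold zigzag
  fun_prop

lemma zigzag_succ (n : ℕ) (W : ℕ → ℤ) (s : ℝ) :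
    zigzag (n + 1) W s = zigzag n W s + ((W (n + 1) : ℝ) - W n) * max 0 (min 1 (s - n)) := by
  rw [zigzag, zigzag, Finset.sum_range_succ, add_assoc]

lemma zigzag_eq_of_le {n : ℕ} (W : ℕ → ℤ) {s : ℝ} (hs : (n : ℝ) ≤ s) : zigzag n W s = W n := by
  induction n with
  | zero => simp [zigzag]
  | succ n ih =>
    push_cast at hs
    rw [zigzag_succ, ih (by linarith), min_eq_left (by linarith), max_eq_right zero_le_one]
    ring

lemma zigzag_eq_of_mem_Icc {n i : ℕ} (W : ℕ → ℤ) {s : ℝ} (hi : i < n)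
    (hs : s ∈ Icc (i : ℝ) (i + 1)) : zigzag n W s = W i + ((W (i + 1) : ℝ) - W i) * (s - i) := by
  induction n with
  | zero => omega
  | succ n ih =>
    rw [zigzag_succ]
    rcases (Nat.lt_succ_iff.mp hi).lt_or_eq with hin | rfl
    · have : s - n ≤ 0 := by
        have : (i : ℝ) + 1 ≤ n := by exact_mod_cast hin
        linarith [hs.2]
      rw [ih hin, min_eq_right (by linarith), max_eq_left this, mul_zero, add_zero]
    · rw [zigzag_eq_of_le W hs.1, min_eq_right (by linarith [hs.2]),
        max_eq_right (by linarith [hs.1])]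

lemma abs_zigzag_sub_le {n i : ℕ} {W : ℕ → ℤ}
    (hstep : ∀ i, W (i + 1) = W i + 1 ∨ W (i + 1) = W i - 1)
    (hi : i < n) {s : ℝ} (hs : s ∈ Icc (i : ℝ) (i + 1)) : |zigzag n W s - W i| ≤ 1 := by
  have hΔ : |(W (i + 1) : ℝ) - W i| = 1 := by rcases hstep i with h | h <;> simp [h]
  rw [zigzag_eq_of_mem_Icc W hi hs, add_sub_cancel_left, abs_mul, hΔ, one_mul,
    abs_of_nonneg (by linarith [hs.1])]
  linarith [hs.2]

lemma zigzag_sub_or_add_even {n : ℕ} {W : ℕ → ℤ}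
    (hstep : ∀ i, W (i + 1) = W i + 1 ∨ W (i + 1) = W i - 1) (hpar : ∀ i, Even (W i - i))
    (hn : 0 < n) {s : ℝ} (hs : s ∈ Icc (0 : ℝ) n) :
    ∃ k : ℤ, zigzag n W s - s = 2 * k ∨ zigzag n W s + s = 2 * k := by
  obtain ⟨i, hi, hsi⟩ := exists_lt_mem_Icc_add_one hn hs
  obtain ⟨k, hk⟩ := hpar i
  have hk' : (W i : ℝ) - i = 2 * k := by rw [← two_mul] at hk; exact_mod_cast hk
  rw [zigzag_eq_of_mem_Icc W hi hsi]
  rcases hstep i with h | h <;> rw [h] <;> push_cast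
  · exact ⟨k, Or.inl (by linarith)⟩
  · exact ⟨k + i, Or.inr (by push_cast; linarith)⟩

/-- The graph of `g` lies on the lines `y = γ (k ± P x / 2)`, `k ∈ ℤ`. -/
def OnZigzagLattice (γ P : ℝ) (g : C(Icc (0 : ℝ) 1, ℝ)) : Prop :=
  ∀ t : Icc (0 : ℝ) 1,
    (∃ k : ℤ, phase (-P / 2, 1 / γ) (t, g t) = k) ∨ ∃ k : ℤ, phase (P / 2, 1 / γ) (t, g t) = k

lemma integer_phase_zigzag {γ : ℝ} (hγ : γ ≠ 0) {n : ℕ} (hn : 0 < n) {W : ℕ → ℤ}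
    (hstep : ∀ i, W (i + 1) = W i + 1 ∨ W (i + 1) = W i - 1) (hpar : ∀ i, Even (W i - i))
    {t : ℝ} (ht : t ∈ Icc (0 : ℝ) 1) :
    (∃ k : ℤ, phase (-(n : ℝ) / 2, 1 / γ) (t, γ / 2 * zigzag n W (n * t)) = k) ∨
      ∃ k : ℤ, phase ((n : ℝ) / 2, 1 / γ) (t, γ / 2 * zigzag n W (n * t)) = k := by
  have hs : (n : ℝ) * t ∈ Icc (0 : ℝ) n :=
    ⟨by positivity [ht.1], mul_le_of_le_one_right (Nat.cast_nonneg n) ht.2⟩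
  have hγz : γ / 2 * zigzag n W (n * t) * (1 / γ) = zigzag n W (n * t) / 2 := by field_simp
  obtain ⟨k, hk | hk⟩ := zigzag_sub_or_add_even hstep hpar hn hs
  · exact Or.inl ⟨k, by simp only [phase]; rw [hγz]; linear_combination hk / 2⟩
  · exact Or.inr ⟨k, by simp only [phase]; rw [hγz]; linear_combination hk / 2⟩

lemma abs_zigzag_greedyWalk_sub_lt {F : ℝ → ℝ} {γ : ℝ} (hγ : 0 < γ) {n : ℕ} (hn : 0 < n)
    (hF : ∀ x y : ℝ, |x - y| ≤ 1 / n → |F x - F y| < γ / 2) {t : ℝ} (ht : t ∈ Icc (0 : ℝ) 1) :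
    |γ / 2 * zigzag n (greedyWalk fun i => 2 / γ * F (i / n)) (n * t) - F t| < 2 * γ := by
  set a : ℕ → ℝ := fun i => 2 / γ * F (i / n)
  set W := greedyWalk a
  have hn' : (0 : ℝ) < n := Nat.cast_pos.mpr hn
  have ha : ∀ i < n, |a (i + 1) - a i| ≤ 1 := by
    intro i _
    have h := hF ((i + 1 : ℕ) / n) (i / n) (by
      rw [← sub_div, Nat.cast_succ, add_sub_cancel_left, abs_of_pos (by positivity)])
    simp only [a, ← mul_sub, abs_mul, abs_of_pos (div_pos two_pos hγ)]
    calc 2 / γ * |F ((i + 1 : ℕ) / n) - F (i / n)| ≤ 2 / γ * (γ / 2) := by gcongr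
      _ = 1 := by field_simp
  have hs : (n : ℝ) * t ∈ Icc (0 : ℝ) n :=
    ⟨by positivity [ht.1], mul_le_of_le_one_right (Nat.cast_nonneg n) ht.2⟩
  obtain ⟨i, hi, hsi⟩ := exists_lt_mem_Icc_add_one hn hs
  have hit : |(i : ℝ) / n - t| ≤ 1 / n := by
    rw [show (i : ℝ) / n - t = (i - n * t) / n by field_simp, abs_div, abs_of_pos hn']
    gcongr
    rw [abs_le]; constructor <;> linarith [hsi.1, hsi.2]
  have hZW : |γ / 2 * zigzag n W (n * t) - γ / 2 * W i| ≤ γ / 2 := by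
    rw [← mul_sub, abs_mul, abs_of_pos (half_pos hγ)]
    exact mul_le_of_le_one_right (half_pos hγ).le
      (abs_zigzag_sub_le (greedyWalk_succ_eq_or a) hi hsi)
  have hWF : |γ / 2 * W i - F (i / n)| ≤ γ / 2 := by
    rw [show γ / 2 * W i - F (i / n) = γ / 2 * (W i - a i) by simp only [a]; field_simp,
      abs_mul, abs_of_pos (half_pos hγ)]
    exact mul_le_of_le_one_right (half_pos hγ).le (abs_greedyWalk_sub_le ha i hi.le)
  linarith [hF _ _ hit, abs_sub_le (γ / 2 * zigzag n W (n * t)) (γ / 2 * W i) (F t),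
    abs_sub_le (γ / 2 * W i) (F (i / n)) (F t)]

lemma exists_onZigzagLattice_dist_lt (f₀ : C(Icc (0 : ℝ) 1, ℝ)) {γ : ℝ} (hγ : 0 < γ) :
    ∃ P : ℝ, ∃ g : C(Icc (0 : ℝ) 1, ℝ), dist g f₀ < 2 * γ ∧ OnZigzagLattice γ P g := by
  set F := IccExtend zero_le_one f₀
  have hF : UniformContinuous F := (CompactSpace.uniformContinuous_of_continuous f₀.continuous).comp
    (LipschitzWith.projIcc zero_le_one).uniformContinuous
  obtain ⟨δ, hδ, hFδ⟩ := Metric.uniformContinuous_iff.mp hF (γ / 2) (half_pos hγ)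
  obtain ⟨m, hm⟩ := exists_nat_one_div_lt hδ
  set W := greedyWalk fun i => 2 / γ * F (i / (m + 1 : ℕ))
  let g : C(Icc (0 : ℝ) 1, ℝ) := ⟨fun t => γ / 2 * zigzag (m + 1) W ((m + 1 : ℕ) * t), by
    have := continuous_zigzag (m + 1) W; fun_prop⟩
  refine ⟨(m + 1 : ℕ), g, (ContinuousMap.dist_lt_iff (by positivity)).mpr fun t => ?_, fun t =>
    integer_phase_zigzag hγ.ne' m.succ_pos (greedyWalk_succ_eq_or _) (even_greedyWalk_sub _) t.2⟩
  rw [Real.dist_eq, ← IccExtend_val zero_le_one f₀ t]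
  exact abs_zigzag_greedyWalk_sub_lt hγ m.succ_pos
    (fun x y hxy => hFδ (hxy.trans_lt (by simpa using hm))) t.2

def largeFourierBeyond (R : ℝ) : Set C(Icc (0 : ℝ) 1, ℝ) :=
  {f | ∀ μ : Measure (ℝ × ℝ), IsProbabilityMeasure μ → μ (graphOf f)ᶜ = 0 →
    ∃ ξ, R ≤ ‖ξ‖ ∧ 1 / 5 < ‖ft2 μ ξ‖}

lemma ball_subset_largeFourierBeyond {R γ P : ℝ} (hγ : 0 < γ) (hR : R ≤ 1 / γ)
    {g : C(Icc (0 : ℝ) 1, ℝ)} (hg : OnZigzagLattice γ P g) :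
    Metric.ball g (γ / 2000) ⊆ largeFourierBeyond R := by
  intro f hf μ _ hμG
  set ζ : Fin 4 → ℝ × ℝ :=
    ![(-P / 2, 1 / γ), (2 : ℝ) • (-P / 2, 1 / γ), (P / 2, 1 / γ), (2 : ℝ) • (P / 2, 1 / γ)]
  have hphase : ∀ (c : ℝ) (t : Icc (0 : ℝ) 1),
      |phase (c, 1 / γ) (t, f t) - phase (c, 1 / γ) (t, g t)| ≤ 1 / 2000 := fun c t => by
    have hft : |f t - g t| < γ / 2000 :=
      (ContinuousMap.dist_apply_le_dist t).trans_lt (Metric.mem_ball.mp hf)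
    rw [phase, phase, add_sub_add_left_eq_sub, ← sub_mul, abs_mul,
      abs_of_pos (one_div_pos.mpr hγ)]
    calc |f t - g t| * (1 / γ) ≤ γ / 2000 * (1 / γ) := by gcongr
      _ = 1 / 2000 := by field_simp
  have hsum : 17 / 20 ≤ ∑ i, (ft2 μ (ζ i)).re := by
    refine le_sum_re_ft2_of_ae_le μ ζ (measure_eq_zero_iff_ae_notMem.mp hμG |>.mono ?_)
    rintro p hp
    obtain ⟨t, hp1, hp2⟩ := not_not.mp hp
    obtain rfl : p = ((t : ℝ), f t) := Prod.ext hp1 hp2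
    exact seventeen_twentieths_le_sum_wave (hg t) (hphase _ t) (hphase _ t)
  have h4 : ∑ _i : Fin 4, (1 / 5 : ℝ) < ∑ i, (ft2 μ (ζ i)).re := by
    rw [Finset.sum_const, Finset.card_univ, Fintype.card_fin, nsmul_eq_mul]
    linarith
  obtain ⟨i, -, hi⟩ := Finset.exists_lt_of_sum_lt h4
  refine ⟨ζ i, hR.trans ((?_ : 1 / γ ≤ ‖(ζ i).2‖).trans (norm_snd_le _)), hi.trans_le
    (Complex.re_le_norm _)⟩
  have : 0 < γ⁻¹ := inv_pos.mpr hγ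
  fin_cases i <;> simp [ζ, abs_of_pos hγ] <;> linarith

lemma dense_interior_largeFourierBeyond (R : ℝ) : Dense (interior (largeFourierBeyond R)) := by
  refine Metric.dense_iff.mpr fun f₀ ε hε => ?_
  set γ := min (ε / 2) (1 / (|R| + 1))
  have hγ : 0 < γ := lt_min (half_pos hε) (by positivity)
  have hR : R ≤ 1 / γ := by
    have h := (le_one_div hγ (by positivity)).mp (min_le_right (ε / 2) (1 / (|R| + 1)))
    linarith [le_abs_self R]
  obtain ⟨P, g, hgf, hg⟩ := exists_onZigzagLattice_dist_lt f₀ hγ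
  refine ⟨g, Metric.mem_ball.mpr (hgf.trans_le ?_), mem_interior.mpr
    ⟨_, ball_subset_largeFourierBeyond hγ hR hg, Metric.isOpen_ball, Metric.mem_ball_self ?_⟩⟩
  · linarith [min_le_left (ε / 2) (1 / (|R| + 1))]
  · exact div_pos hγ (by norm_num)

theorem typical_no_decay :
    {f : C(Set.Icc (0:ℝ) 1, ℝ) |
      ∀ μ : Measure (ℝ × ℝ), IsProbabilityMeasure μ → μ (graphOf f)ᶜ = 0 →
        (1 / 5 : ℝ) ≤ Filter.limsup (fun ξ : ℝ × ℝ => ‖ft2 μ ξ‖) (cocompact (ℝ × ℝ))}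
      ∈ residual C(Set.Icc (0:ℝ) 1, ℝ) := by
  have hres : (⋂ N : ℕ, interior (largeFourierBeyond N)) ∈ residual C(Icc (0 : ℝ) 1, ℝ) :=
    countable_iInter_mem.mpr fun N =>
      residual_of_dense_open isOpen_interior (dense_interior_largeFourierBeyond N)
  refine mem_of_superset hres fun f hf μ hμ hμG => ?_
  refine le_limsup_cocompact_of_forall_exists ⟨1, ?_⟩ fun R => ?_
  · rintro _ ⟨ξ, rfl⟩
    exact norm_ft2_le_one μ ξ
  obtain ⟨N, hN⟩ := exists_nat_ge R
  obtain ⟨ξ, hξ, h⟩ := interior_subset (mem_iInter.mp hf N) μ hμ hμG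
  exact ⟨ξ, hN.trans hξ, h.le⟩
end

section
/- For a typical function f ∈ C[0,1] (in the Baire category sense), the Fourier dimension of the graph G_f equals zero. -/
open MeasureTheory Filter Set

/-- The Fourier dimension of a subset of the plane. -/
noncomputable def fourierDim2 (K : Set (ℝ × ℝ)) : ℝ :=
  sSup {s : ℝ | 0 ≤ s ∧ s ≤ 2 ∧ ∃ (μ : Measure (ℝ × ℝ)) (C : ℝ),
    IsProbabilityMeasure μ ∧ μ Kᶜ = 0 ∧ 0 < C ∧
    ∀ ξ : ℝ × ℝ, ξ ≠ 0 → ‖ft2 μ ξ‖ ≤ C * enorm2 ξ ^ (-s / 2)}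

/-!
If `μ` is a probability measure carried by a set on which
`2 cos(2πn x) + cos(4πn x) + 2 cos(2πn y) + cos(4πn y) ≥ 6/5`, then integrating this
trigonometric polynomial against `μ` shows that `|μ̂(ξ)| ≥ 1/5` for one of the frequencies
`(n, 0), (2n, 0), (0, n), (0, 2n)`. The inequality holds near the grid lines `x ∈ ℤ/n`,
`y ∈ ℤ/n`, because `2 cos θ + cos 2θ` exceeds `2.94` near `2πℤ` and is never below `-3/2`.
For each `k`, the functions whose graph lies near such a grid for some `n > k` form an open
dense set: any `f` is uniformly close to a staircase with steps in `ℤ/N` whose risers sit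
where `N x` is close to an integer. For `f` in all of these sets, `μ̂` does not tend to `0`
for any probability measure `μ` on the graph, so no power decay is possible.
-/

lemma re_ft2_s15 (μ : Measure (ℝ × ℝ)) [IsFiniteMeasure μ] (ξ : ℝ × ℝ) :
    (ft2 μ ξ).re = ∫ p, Real.cos (2 * Real.pi * (p.1 * ξ.1 + p.2 * ξ.2)) ∂μ := by
  have hint : Integrable (fun p : ℝ × ℝ =>
      Complex.exp (-2 * Real.pi * Complex.I * ((p.1 * ξ.1 + p.2 * ξ.2 : ℝ) : ℂ))) μ := by
    exact Integrable.of_bound (by fun_prop) 1 (ae_of_all _ fun p => by simp [Complex.norm_exp])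
  rw [ft2, ← RCLike.re_to_complex, ← integral_re hint]
  congr 1 with p
  simp [Complex.exp_re]

lemma exists_le_norm_ft2_of_ae_le_sum_cos {ι : Type*} [Fintype ι] [Nonempty ι]
    (w : ι → ℝ) (hw : ∀ i, 0 < w i) (ξ : ι → ℝ × ℝ) {c : ℝ}
    (μ : Measure (ℝ × ℝ)) [IsProbabilityMeasure μ]
    (h : ∀ᵐ p ∂μ, (∑ i, w i) * c ≤
      ∑ i, w i * Real.cos (2 * Real.pi * (p.1 * (ξ i).1 + p.2 * (ξ i).2))) :
    ∃ i, c ≤ ‖ft2 μ (ξ i)‖ := by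
  by_contra! hlt
  have hcos : ∀ i, Integrable
      (fun p : ℝ × ℝ => w i * Real.cos (2 * Real.pi * (p.1 * (ξ i).1 + p.2 * (ξ i).2))) μ :=
    fun i => (Integrable.of_bound (by fun_prop) 1 (ae_of_all _ fun p => by
      simpa using Real.abs_cos_le_one _)).const_mul (w i)
  have := calc
    (∑ i, w i) * c
        ≤ ∫ p, ∑ i, w i * Real.cos (2 * Real.pi * (p.1 * (ξ i).1 + p.2 * (ξ i).2)) ∂μ := by
        simpa using
          integral_mono_ae (integrable_const _) (integrable_finsetSum _ fun i _ => hcos i) h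
    _ = ∑ i, w i * (ft2 μ (ξ i)).re := by
        rw [integral_finsetSum _ fun i _ => hcos i]
        simp only [integral_const_mul, re_ft2_s15]
    _ ≤ ∑ i, w i * ‖ft2 μ (ξ i)‖ :=
        Finset.sum_le_sum fun i _ => mul_le_mul_of_nonneg_left (Complex.re_le_norm _) (hw i).le
    _ < ∑ i, w i * c :=
        Finset.sum_lt_sum_of_nonempty Finset.univ_nonempty fun i _ =>
          mul_lt_mul_of_pos_left (hlt i) (hw i)
  rw [Finset.sum_mul] at this
  exact this.false

lemma fourierDim2_eq_zero_of_forall_exists_le_norm_ft2 {K : Set (ℝ × ℝ)} {c : ℝ} (hc : 0 < c)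
    (h : ∀ (μ : Measure (ℝ × ℝ)) [IsProbabilityMeasure μ], μ Kᶜ = 0 →
      ∀ R : ℝ, ∃ ξ, ξ ≠ 0 ∧ R ≤ enorm2 ξ ∧ c ≤ ‖ft2 μ ξ‖) :
    fourierDim2 K = 0 := by
  refine le_antisymm (Real.sSup_nonpos fun s hs => ?_) (Real.sSup_nonneg fun s hs => hs.1)
  obtain ⟨-, -, μ, C, hμ, hμK, -, hdecay⟩ := hs
  by_contra! hs
  have hlim : Tendsto (fun r : ℝ => C * r ^ (-s / 2)) atTop (nhds 0) := by
    simpa [neg_div] using (tendsto_rpow_neg_atTop (half_pos hs)).const_mul C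
  obtain ⟨R, hR⟩ := eventually_atTop.1 (hlim.eventually (gt_mem_nhds hc))
  obtain ⟨ξ, hξ, hRξ, hcξ⟩ := h μ hμK R
  linarith [hdecay ξ hξ, hR _ hRξ]

-- An open neighbourhood of the grid lines `x ∈ ℤ/n` and `y ∈ ℤ/n`.
def gridNbhd (n : ℕ) : Set (ℝ × ℝ) :=
  {p | 99 / 100 < Real.cos (2 * Real.pi * n * p.1) ∨ 99 / 100 < Real.cos (2 * Real.pi * n * p.2)}

lemma isOpen_gridNbhd (n : ℕ) : IsOpen (gridNbhd n) := by
  rw [gridNbhd, ofPred_or]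
  exact (isOpen_lt continuous_const (by fun_prop)).union
    (isOpen_lt continuous_const (by fun_prop))

-- With `u = cos θ`, `2 cos θ + cos 2θ = 2u² + 2u - 1`: always `≥ -3/2`, and `> 2.94` if `u > 0.99`.
lemma six_fifths_le_two_cos_add_cos_two_mul {a b : ℝ}
    (h : 99 / 100 < Real.cos a ∨ 99 / 100 < Real.cos b) :
    6 / 5 ≤ 2 * Real.cos a + Real.cos (2 * a) + (2 * Real.cos b + Real.cos (2 * b)) := by
  rw [Real.cos_two_mul, Real.cos_two_mul]
  have := Real.cos_le_one a
  have := Real.cos_le_one b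
  rcases h with h | h
  · nlinarith [sq_nonneg (Real.cos b + 1 / 2)]
  · nlinarith [sq_nonneg (Real.cos a + 1 / 2)]

lemma exists_le_norm_ft2_of_ae_mem_gridNbhd {n : ℕ} (hn : 0 < n)
    (μ : Measure (ℝ × ℝ)) [IsProbabilityMeasure μ] (h : ∀ᵐ p ∂μ, p ∈ gridNbhd n) :
    ∃ ξ, ξ ≠ 0 ∧ (n : ℝ) ≤ enorm2 ξ ∧ 1 / 5 ≤ ‖ft2 μ ξ‖ := by
  obtain ⟨i, hi⟩ := exists_le_norm_ft2_of_ae_le_sum_cos ![2, 1, 2, 1]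
    (by intro i; fin_cases i <;> norm_num)
    ![((n : ℝ), 0), (2 * n, 0), (0, n), (0, 2 * n)] (c := 1 / 5) μ (by
      filter_upwards [h] with p hp
      have := six_fifths_le_two_cos_add_cos_two_mul hp
      simp only [Fin.sum_univ_four, Fin.isValue, Matrix.cons_val_zero, Matrix.cons_val_one,
        Matrix.cons_val, mul_zero, add_zero, zero_add, one_mul]
      ring_nf at this ⊢
      linarith)
  refine ⟨_, ?_, ?_, hi⟩ <;> fin_cases i <;> simp [enorm2, hn.ne'] <;> linarith

lemma isOpen_setOf_forall_prodMk_mem {X Y : Type*} [TopologicalSpace X] [TopologicalSpace Y]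
    [CompactSpace X] [LocallyCompactSpace X] {W : Set (X × Y)} (hW : IsOpen W) :
    IsOpen {f : C(X, Y) | ∀ x, (x, f x) ∈ W} := by
  let graph : C(C(X, Y), C(X, X × Y)) :=
    ContinuousMap.curry ⟨fun p : C(X, Y) × X => (p.2, p.1 p.2), by fun_prop⟩
  simpa [Set.MapsTo, graph] using
    (ContinuousMap.isOpen_setOfPred_mapsTo isCompact_univ hW).preimage graph.continuous

lemma graphOf_subset_iff {f : C(Icc (0 : ℝ) 1, ℝ)} {V : Set (ℝ × ℝ)} :
    graphOf f ⊆ V ↔ ∀ x : Icc (0 : ℝ) 1, ((x : ℝ), f x) ∈ V :=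
  ⟨fun h x => h ⟨x, rfl, rfl⟩, by rintro h ⟨a, b⟩ ⟨x, rfl, rfl⟩; exact h x⟩

lemma isOpen_setOf_graphOf_subset {V : Set (ℝ × ℝ)} (hV : IsOpen V) :
    IsOpen {f : C(Icc (0 : ℝ) 1, ℝ) | graphOf f ⊆ V} := by
  simp_rw [graphOf_subset_iff]
  exact isOpen_setOf_forall_prodMk_mem
    (W := (fun q : Icc (0 : ℝ) 1 × ℝ => ((q.1 : ℝ), q.2)) ⁻¹' V) (hV.preimage (by fun_prop))

noncomputable def ramp (s : ℝ) : ℝ := max 0 (min 1 (100 * s - 99))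

lemma ramp_eq_zero {s : ℝ} (hs : s ≤ 99 / 100) : ramp s = 0 :=
  max_eq_left ((min_le_right _ _).trans (by linarith))

lemma ramp_eq_one {s : ℝ} (hs : 1 ≤ s) : ramp s = 1 := by
  rw [ramp, min_eq_left (by linarith), max_eq_right zero_le_one]

lemma ramp_mem_Icc (s : ℝ) : ramp s ∈ Icc 0 1 :=
  ⟨le_max_left _ _, max_le zero_le_one (min_le_left _ _)⟩

@[fun_prop]
lemma continuous_ramp : Continuous ramp := by
  unfold ramp; fun_prop

-- Equal to `c j` on `[j, j + 99/100]`, rising linearly to `c (j + 1)` on `[j + 99/100, j + 1]`.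
noncomputable def stair (c : ℕ → ℝ) (N : ℕ) (t : ℝ) : ℝ :=
  c 0 + ∑ i ∈ Finset.range N, (c (i + 1) - c i) * ramp (t - i)

lemma continuous_stair (c : ℕ → ℝ) (N : ℕ) : Continuous (stair c N) := by
  unfold stair
  fun_prop

lemma exists_nat_lt_mem_Icc {N : ℕ} (hN : 0 < N) {t : ℝ} (ht : t ∈ Icc 0 (N : ℝ)) :
    ∃ j < N, t ∈ Icc (j : ℝ) (j + 1) := by
  rcases lt_or_ge t (N - 1 + 1 : ℕ) with h | h
  · refine ⟨⌊t⌋₊, ?_, Nat.floor_le ht.1, (Nat.lt_floor_add_one t).le⟩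
    have := (Nat.floor_lt ht.1).2 h
    omega
  · refine ⟨N - 1, by omega, ?_, ?_⟩ <;> push_cast [Nat.cast_sub hN] at h ⊢ <;> linarith [ht.2]

lemma stair_eq {c : ℕ → ℝ} {N j : ℕ} (hj : j < N) {t : ℝ} (ht : t ∈ Icc (j : ℝ) (j + 1)) :
    stair c N t = c j + (c (j + 1) - c j) * ramp (t - j) := by
  have hflat : ∀ i ∈ Finset.range j, (c (i + 1) - c i) * ramp (t - i) = c (i + 1) - c i := by
    intro i hi
    have : (i : ℝ) + 1 ≤ j := by exact_mod_cast Finset.mem_range.1 hi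
    rw [ramp_eq_one (by linarith [ht.1]), mul_one]
  have hzero : ∀ i ∈ Finset.Ico (j + 1) N, (c (i + 1) - c i) * ramp (t - i) = 0 := by
    intro i hi
    have : (j : ℝ) + 1 ≤ i := by exact_mod_cast (Finset.mem_Ico.1 hi).1
    rw [ramp_eq_zero (by linarith [ht.2]), mul_zero]
  rw [stair, ← Finset.sum_range_add_sum_Ico _ hj, Finset.sum_eq_zero hzero,
    Finset.sum_range_succ, Finset.sum_congr rfl hflat, Finset.sum_range_sub]
  ring

lemma lt_cos_of_abs_le {t : ℝ} (ht : |t| ≤ 1 / 10) : 99 / 100 < Real.cos t := by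
  have hsq : t ^ 2 ≤ (1 / 10) ^ 2 := by
    rw [← sq_abs]; exact pow_le_pow_left₀ (abs_nonneg t) ht 2
  linarith [Real.one_sub_sq_div_two_le_cos (x := t)]

lemma stair_mem_gridNbhd {N : ℕ} (hN : 0 < N) (m : ℕ → ℤ) {x : ℝ} (hx : x ∈ Icc 0 1) :
    (x, stair (fun i => m i / N) N (N * x)) ∈ gridNbhd N := by
  obtain ⟨j, hj, hjx⟩ := exists_nat_lt_mem_Icc hN (t := N * x)
    ⟨by nlinarith [hx.1], by nlinarith [hx.2]⟩
  by_cases hflat : N * x - j ≤ 99 / 100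
  · right
    dsimp only
    rw [stair_eq hj hjx, ramp_eq_zero hflat, mul_zero, add_zero,
      show 2 * Real.pi * N * (m j / N) = m j * (2 * Real.pi) by field_simp,
      Real.cos_int_mul_two_pi]
    norm_num
  · left
    rw [show 2 * Real.pi * N * x
        = 2 * Real.pi * (N * x - (j + 1)) + ((j + 1 : ℕ) : ℤ) * (2 * Real.pi) by push_cast; ring,
      Real.cos_add_int_mul_two_pi]
    refine lt_cos_of_abs_le ?_
    have hramp : |(N : ℝ) * x - (j + 1)| ≤ 1 / 100 :=
      abs_le.2 ⟨by linarith, by linarith [hjx.2]⟩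
    rw [abs_mul, abs_of_pos Real.two_pi_pos]
    nlinarith [Real.pi_lt_d2, abs_nonneg ((N : ℝ) * x - (j + 1))]

lemma abs_stair_sub_lt {c : ℕ → ℝ} {N : ℕ} (hN : 0 < N) {t y ε : ℝ} (ht : t ∈ Icc 0 (N : ℝ))
    (hc : ∀ i : ℕ, |t - i| ≤ 1 → |c i - y| < ε) : |stair c N t - y| < ε := by
  obtain ⟨j, hj, hjt⟩ := exists_nat_lt_mem_Icc hN ht
  have hj₀ : |c j - y| < ε := hc j (abs_le.2 ⟨by linarith [hjt.1], by linarith [hjt.2]⟩)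
  have hj₁ : |c (j + 1) - y| < ε :=
    hc (j + 1) (abs_le.2 ⟨by push_cast; linarith [hjt.1], by push_cast; linarith [hjt.2]⟩)
  have := (convex_ball y ε).add_smul_sub_mem (by simpa [Real.dist_eq] using hj₀)
    (by simpa [Real.dist_eq] using hj₁) (ramp_mem_Icc (t - j))
  rw [stair_eq hj hjt, mul_comm]
  simpa [Real.dist_eq] using this

lemma abs_round_mul_div_sub_le {N : ℕ} (hN : 0 < N) (y : ℝ) :
    |round (N * y) / (N : ℝ) - y| ≤ 1 / (2 * N) := by
  have hN' : (0 : ℝ) < N := by exact_mod_cast hN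
  rw [show round (N * y) / (N : ℝ) - y = -((N * y - round (N * y)) / N) by field_simp; ring,
    abs_neg, abs_div, abs_of_pos hN', div_le_div_iff₀ hN' (by positivity)]
  nlinarith [abs_sub_round ((N : ℝ) * y)]

lemma dense_setOf_exists_graphOf_subset_gridNbhd (k : ℕ) :
    Dense {f : C(Icc (0 : ℝ) 1, ℝ) | ∃ n > k, graphOf f ⊆ gridNbhd n} := by
  rw [Metric.dense_iff]
  intro f ε hε
  set F := IccExtend zero_le_one f
  have hF : UniformContinuous F :=
    (CompactSpace.uniformContinuous_of_continuous f.continuous).comp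
      (LipschitzWith.projIcc zero_le_one).uniformContinuous
  obtain ⟨δ, hδ, hFδ⟩ := Metric.uniformContinuous_iff.1 hF (ε / 2) (half_pos hε)
  obtain ⟨N, hN⟩ := exists_nat_gt (max (k : ℝ) (max (1 / δ) (1 / ε)))
  have hkN : k < N := by exact_mod_cast (le_max_left _ _).trans_lt hN
  have hN₀ : 0 < N := by omega
  have hN' : (0 : ℝ) < N := by exact_mod_cast hN₀
  have hNδ : 1 / (N : ℝ) < δ := by
    rw [div_lt_comm₀ hN' hδ]; exact (le_max_left _ _).trans_lt ((le_max_right _ _).trans_lt hN)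
  have hNε : 1 / (N : ℝ) < ε := by
    rw [div_lt_comm₀ hN' hε]; exact (le_max_right _ _).trans_lt ((le_max_right _ _).trans_lt hN)
  set m : ℕ → ℤ := fun i => round (N * F (i / N))
  let g : C(Icc (0 : ℝ) 1, ℝ) :=
    ⟨fun x => stair (fun i => m i / N) N (N * x), (continuous_stair _ N).comp (by fun_prop)⟩
  refine ⟨g, ?_, N, hkN, graphOf_subset_iff.2 fun x => stair_mem_gridNbhd hN₀ m x.2⟩
  rw [Metric.mem_ball, ContinuousMap.dist_lt_iff hε]
  intro x
  rw [Real.dist_eq]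
  dsimp only [g, ContinuousMap.coe_mk]
  refine abs_stair_sub_lt (t := N * x) hN₀ ⟨by nlinarith [x.2.1], by nlinarith [x.2.2]⟩
    fun i hi => ?_
  have hround := abs_round_mul_div_sub_le hN₀ (F (i / N))
  have hclose : |F (i / N) - f x| < ε / 2 := by
    rw [← IccExtend_val zero_le_one f x, ← Real.dist_eq]
    refine hFδ ?_
    rw [Real.dist_eq, show (i : ℝ) / N - x = -((N * x - i) / N) by field_simp; ring, abs_neg,
      abs_div, abs_of_pos hN']
    exact (div_le_div_of_nonneg_right hi hN'.le).trans_lt hNδ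
  have : 1 / (2 * (N : ℝ)) < ε / 2 := by
    rw [mul_comm, ← div_div]; linarith
  calc |(m i : ℝ) / N - f x| ≤ |(m i : ℝ) / N - F (i / N)| + |F (i / N) - f x| :=
        abs_sub_le _ _ _
    _ < ε := by linarith

lemma fourierDim2_graphOf_eq_zero {f : C(Icc (0 : ℝ) 1, ℝ)}
    (hf : ∀ k : ℕ, ∃ n > k, graphOf f ⊆ gridNbhd n) :
    fourierDim2 (graphOf f) = 0 := by
  refine fourierDim2_eq_zero_of_forall_exists_le_norm_ft2 (c := 1 / 5) (by norm_num)
    fun μ _ hμ R => ?_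
  obtain ⟨n, hn, hsub⟩ := hf ⌈R⌉₊
  obtain ⟨ξ, hξ, hnξ, hcξ⟩ := exists_le_norm_ft2_of_ae_mem_gridNbhd (by omega : 0 < n) μ
    (measure_mono_null (compl_subset_compl.2 hsub) hμ)
  refine ⟨ξ, hξ, le_trans ?_ hnξ, hcξ⟩
  exact (Nat.le_ceil R).trans (by exact_mod_cast hn.le)

theorem typical_fourier_dim_zero :
    {f : C(Set.Icc (0:ℝ) 1, ℝ) | fourierDim2 (graphOf f) = 0}
      ∈ residual C(Set.Icc (0:ℝ) 1, ℝ) := by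
  have hresidual (k : ℕ) : {f : C(Icc (0 : ℝ) 1, ℝ) | ∃ n > k, graphOf f ⊆ gridNbhd n} ∈
      residual _ := by
    refine residual_of_dense_open ?_ (dense_setOf_exists_graphOf_subset_gridNbhd k)
    rw [ofPred_exists]
    exact isOpen_iUnion fun n =>
      isOpen_const.and (isOpen_setOf_graphOf_subset (isOpen_gridNbhd n))
  filter_upwards [countable_iInter_mem.2 hresidual] with f hf
  exact fourierDim2_graphOf_eq_zero (by simpa using hf)
end
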